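/- Let G be a finite simple graph, s a vertex of G, and X ⊆ V(G) with |X| = l such that G ∖ X is a clique. Then every optimal strategy for the firefighting process on (G, s) defends at most l + 1 vertices. -/

import Mathlib

open SimpleGraph

variable {V : Type*}

/-- The set of vertices burned by the end of time step `i` (0-indexed: `burnt G s S i` is `B_i`),
when a fire starts at `s` and the firefighter defends the vertices of the list `S` in order. -/
def burnt (G : SimpleGraph V) (s : V) (S : List V) : ℕ → Set V
  | 0 => {s}
  | i + 1 => burnt G s S i ∪
      {u | u ∉ S.take (i + 1) ∧ ∃ b ∈ burnt G s S i, G.Adj u b}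

/-- The set of all vertices ever burned by the strategy `S`. -/
def BurntSet (G : SimpleGraph V) (s : V) (S : List V) : Set V := ⋃ i, burnt G s S i

/-- A strategy is a sequence of pairwise distinct vertices; it is valid if the vertex defended
at each step is not yet burning at the start of that step. -/
def ValidStrategy (G : SimpleGraph V) (s : V) (S : List V) : Prop :=
  S.Nodup ∧ ∀ (i : ℕ) (h : i < S.length), S.get ⟨i, h⟩ ∉ burnt G s S i

/-- The number of vertices saved (i.e. not burned) by the strategy `S`. -/
noncomputable def sav (G : SimpleGraph V) (s : V) (S : List V) : ℕ := (BurntSet G s S)ᶜ.ncard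

/-- A valid strategy is minimal if every proper subsequence of it which is itself a valid
strategy saves strictly fewer vertices. -/
def MinimalStrategy (G : SimpleGraph V) (s : V) (S : List V) : Prop :=
  ValidStrategy G s S ∧ ∀ S' : List V, S'.Sublist S → S' ≠ S → ValidStrategy G s S' →
    sav G s S' < sav G s S

/-- A strategy is optimal if it is minimal and saves the maximum number of vertices. -/
def OptimalStrategy (G : SimpleGraph V) (s : V) (S : List V) : Prop :=
  MinimalStrategy G s S ∧ ∀ S' : List V, ValidStrategy G s S' → sav G s S' ≤ sav G s S

/-- A walk is an induced path if it is a path and the subgraph induced on its vertices has no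
edges besides the edges of the path. -/
def IsInducedPath (G : SimpleGraph V) {a b : V} (p : G.Walk a b) : Prop :=
  p.IsPath ∧ ∀ x ∈ p.support, ∀ y ∈ p.support, G.Adj x y → p.toSubgraph.Adj x y

/-- `u` is reachable from `s` in the subgraph of `G` induced on the complement of `A`. -/
def ReachAvoiding (G : SimpleGraph V) (A : Set V) (s u : V) : Prop :=
  ∃ p : G.Walk s u, ∀ x ∈ p.support, x ∉ A

/-! Let `c` be the last defended vertex outside `X`, defended at step `k + 2`. It has no neighbour
burning at time `k` (it would catch fire at step `k + 1`), so by the clique property `B_k ⊆ X`.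
By minimality `c` has a neighbour that burns eventually, hence only after time `k`; so the fire
grows at each of the first `k` steps and `|B_k| ≥ k + 1`. The vertices defended after `c` lie in
`X` and never burn, so there are at most `l - (k + 1)` of them, and at most
`(k + 2) + (l - k - 1) = l + 1` vertices are defended. -/

theorem List.forall_or_exists_eq_append_cons {α : Type*} (p : α → Prop) (l : List α) :
    (∀ a ∈ l, p a) ∨ ∃ L c R, l = L ++ c :: R ∧ ¬ p c ∧ ∀ a ∈ R, p a := by
  induction l with
  | nil => exact .inl fun _ h => absurd h List.not_mem_nil
  | cons a t ih =>
    rcases ih with ht | ⟨L, c, R, rfl, hc, hR⟩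
    · by_cases ha : p a
      · exact .inl (List.forall_mem_cons.2 ⟨ha, ht⟩)
      · exact .inr ⟨[], a, t, rfl, ha, ht⟩
    · exact .inr ⟨a :: L, c, R, rfl, hc, hR⟩

theorem List.Nodup.length_le_ncard {α : Type*} {l : List α} {X : Set α} (hl : l.Nodup)
    (hX : X.Finite) (h : ∀ a ∈ l, a ∈ X) : l.length ≤ X.ncard := by
  classical
  rw [← List.toFinset_card_of_nodup hl, ← Set.ncard_coe_finset]
  exact Set.ncard_le_ncard (fun a ha => h a (List.mem_toFinset.1 ha)) hX

section

variable {G : SimpleGraph V} {s : V} {S : List V}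

theorem burnt_mono : Monotone (burnt G s S) :=
  monotone_nat_of_le_succ fun _ => Set.subset_union_left

theorem burnt_subset_burntSet (i : ℕ) : burnt G s S i ⊆ BurntSet G s S :=
  Set.subset_iUnion _ i

theorem burntSet_eq_burnt_of_succ_eq {j : ℕ} (h : burnt G s S (j + 1) = burnt G s S j) :
    BurntSet G s S = burnt G s S j := by
  have hstable : ∀ k, burnt G s S (j + k) = burnt G s S j := by
    intro k
    induction k with
    | zero => rfl
    | succ k ih =>
      refine (Set.union_subset ih.le ?_).antisymm (burnt_mono (Nat.le_add_right j (k + 1)))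
      rintro u ⟨hu : u ∉ S.take (j + k + 1), b, hb, hadj⟩
      rw [← h]
      have hu' : u ∉ S.take (j + 1) := fun hm => hu (List.take_subset_take_left _ (by omega) hm)
      exact Or.inr ⟨hu', b, ih ▸ hb, hadj⟩
  refine (Set.iUnion_subset fun k => ?_).antisymm (burnt_subset_burntSet j)
  exact (burnt_mono (Nat.le_add_left k j)).trans (hstable k).le

theorem succ_le_ncard_burnt [Finite V] {n : ℕ} (h : ¬ BurntSet G s S ⊆ burnt G s S n) :
    n + 1 ≤ (burnt G s S n).ncard := by
  induction n with
  | zero => simp [burnt]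
  | succ n ih =>
    have hgrow : burnt G s S n ≠ burnt G s S (n + 1) := fun heq =>
      h ((burntSet_eq_burnt_of_succ_eq heq.symm).subset.trans (burnt_mono (n.le_add_right 1)))
    have := ih fun hn => h (hn.trans (burnt_mono (n.le_add_right 1)))
    have := Set.ncard_lt_ncard ((burnt_mono (n.le_add_right 1)).ssubset_of_ne hgrow)
      (Set.toFinite _)
    omega

theorem validStrategy_iff :
    ValidStrategy G s S ↔ S.Nodup ∧ ∀ v ∈ S, v ∉ BurntSet G s S := by
  refine ⟨fun hS => ⟨hS.1, fun v hv hvB => ?_⟩, fun hS => ⟨hS.1, fun i hi hb => ?_⟩⟩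
  · obtain ⟨q, hq, rfl⟩ := List.mem_iff_getElem.1 hv
    obtain ⟨k, hk⟩ := Set.mem_iUnion.1 hvB
    induction k with
    | zero => exact hS.2 q hq (burnt_mono (Nat.zero_le q) hk)
    | succ k ih =>
      rcases hk with hk | ⟨hnt, b, hb, hadj⟩
      · exact ih hk
      · by_cases hqk : q ≤ k
        · exact hnt (List.mem_take_iff_getElem.2 ⟨q, Nat.lt_min.2 ⟨by omega, hq⟩, rfl⟩)
        · have hburns : S[q] ∈ burnt G s S (k + 1) := Or.inr ⟨hnt, b, hb, hadj⟩
          exact hS.2 q hq (burnt_mono (show k + 1 ≤ q by omega) hburns)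
  · exact hS.2 _ (List.getElem_mem hi) (burnt_subset_burntSet i hb)

theorem burnt_erase_subset [DecidableEq V] {v : V}
    (hv : ∀ b ∈ BurntSet G s S, ¬ G.Adj v b) (k : ℕ) :
    burnt G s (S.erase v) k ⊆ burnt G s S k := by
  induction k with
  | zero => exact subset_rfl
  | succ k ih =>
    refine Set.union_subset (ih.trans (burnt_mono k.le_succ)) ?_
    rintro u ⟨hu, b, hb, hadj⟩
    have huv : u ≠ v := by
      rintro rfl
      exact hv b (burnt_subset_burntSet k (ih hb)) hadj
    -- erasing `v` only moves the other vertices of `S` earlier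
    have hprefix : (S.take (k + 1)).erase v <+: (S.erase v).take (k + 1) :=
      List.prefix_take_iff.2 ⟨(List.take_prefix _ S).erase v,
        List.length_erase_le.trans (List.length_take_le _ _)⟩
    have hu' : u ∉ S.take (k + 1) := fun hm =>
      hu (hprefix.subset ((List.mem_erase_of_ne huv).2 hm))
    exact Or.inr ⟨hu', b, ih hb, hadj⟩

theorem MinimalStrategy.exists_adj_burntSet [Finite V] (hS : MinimalStrategy G s S) {v : V}
    (hv : v ∈ S) : ∃ b ∈ BurntSet G s S, G.Adj v b := by
  classical
  by_contra! hsafe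
  have hsub : BurntSet G s (S.erase v) ⊆ BurntSet G s S :=
    Set.iUnion_mono (burnt_erase_subset hsafe)
  have hvalid : ValidStrategy G s (S.erase v) := by
    obtain ⟨hnodup, hunburnt⟩ := validStrategy_iff.1 hS.1
    exact validStrategy_iff.2 ⟨hnodup.erase v,
      fun w hw hwB => hunburnt w (List.mem_of_mem_erase hw) (hsub hwB)⟩
  have hne : S.erase v ≠ S := fun h => by
    have := congrArg List.length h
    rw [List.length_erase_of_mem hv] at this
    have := List.length_pos_of_mem hv
    omega
  have hlt := hS.2 _ List.erase_sublist hne hvalid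
  have hle : sav G s S ≤ sav G s (S.erase v) :=
    Set.ncard_le_ncard (Set.compl_subset_compl.2 hsub) (Set.toFinite _)
  omega

theorem ValidStrategy.not_adj_of_mem_burnt {L R : List V} {c b : V} {k : ℕ}
    (hS : ValidStrategy G s (L ++ c :: R)) (hk : k < L.length)
    (hb : b ∈ burnt G s (L ++ c :: R) k) : ¬ G.Adj c b := by
  intro hadj
  have hcL : c ∉ L := fun h =>
    (List.nodup_cons.1 (List.nodup_middle.1 hS.1)).1 (List.mem_append_left R h)
  have hct : c ∉ (L ++ c :: R).take (k + 1) := by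
    rw [List.take_append_of_le_length hk]
    exact fun h => hcL (List.mem_of_mem_take h)
  exact (validStrategy_iff.1 hS).2 c (by simp)
    (burnt_subset_burntSet (k + 1) (Or.inr ⟨hct, b, hb, hadj⟩))

theorem MinimalStrategy.length_le_ncard_inter_burntSet [Finite V] {X : Set V}
    (hclique : ∀ u ∉ X, ∀ v ∉ X, u ≠ v → G.Adj u v) {L R : List V} {c : V}
    (hS : MinimalStrategy G s (L ++ c :: R)) (hc : c ∉ X) :
    L.length ≤ (X ∩ BurntSet G s (L ++ c :: R)).ncard := by
  rcases hL : L.length with _ | k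
  · exact Nat.zero_le _
  have hnadj : ∀ b ∈ burnt G s (L ++ c :: R) k, ¬ G.Adj c b :=
    fun b hb => hS.1.not_adj_of_mem_burnt (by omega) hb
  have hcB : c ∉ BurntSet G s (L ++ c :: R) := (validStrategy_iff.1 hS.1).2 c (by simp)
  have hBX : burnt G s (L ++ c :: R) k ⊆ X := fun u hu => by
    by_contra huX
    have hcu : c ≠ u := (ne_of_mem_of_not_mem (burnt_subset_burntSet k hu) hcB).symm
    exact hnadj u hu (hclique c hc u huX hcu)
  obtain ⟨b, hb, hadj⟩ := hS.exists_adj_burntSet (v := c) (by simp)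
  have hgrow : k + 1 ≤ (burnt G s (L ++ c :: R) k).ncard :=
    succ_le_ncard_burnt fun h => hnadj b (h hb) hadj
  exact hgrow.trans (Set.ncard_le_ncard (Set.subset_inter hBX (burnt_subset_burntSet k))
    (Set.toFinite _))

theorem MinimalStrategy.length_le_ncard_add_one [Finite V] {X : Set V}
    (hclique : ∀ u ∉ X, ∀ v ∉ X, u ≠ v → G.Adj u v) (hS : MinimalStrategy G s S) :
    S.length ≤ X.ncard + 1 := by
  rcases S.forall_or_exists_eq_append_cons (· ∈ X) with hSX | ⟨L, c, R, rfl, hc, hRX⟩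
  · exact (hS.1.1.length_le_ncard (Set.toFinite X) hSX).trans (Nat.le_succ _)
  have hL := hS.length_le_ncard_inter_burntSet hclique hc
  have hR : R.length ≤ (X \ BurntSet G s (L ++ c :: R)).ncard := by
    obtain ⟨hnodup, hunburnt⟩ := validStrategy_iff.1 hS.1
    exact hnodup.of_append_right.of_cons.length_le_ncard (Set.toFinite _)
      fun v hv => ⟨hRX v hv, hunburnt v (by simp [hv])⟩
  have := Set.ncard_inter_add_ncard_sdiff_eq_ncard X (BurntSet G s (L ++ c :: R))
  simp only [List.length_append, List.length_cons]
  omega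

end

/-- If `X ⊆ V(G)` has size `l` and `G ∖ X` is a clique, then every optimal
strategy for the firefighting process on `(G, s)` defends at most `l + 1` vertices. -/
theorem optimal_strategy_le_of_clique_modulator {V : Type*} [Fintype V] (G : SimpleGraph V)
    (s : V) (X : Finset V) (l : ℕ) (hX : X.card = l)
    (hclique : ∀ u ∉ X, ∀ v ∉ X, u ≠ v → G.Adj u v)
    (S : List V) (hS : OptimalStrategy G s S) :
    S.length ≤ l + 1 := by
  have := hS.1.length_le_ncard_add_one (X := (X : Set V)) hclique
  rwa [Set.ncard_coe_finset, hX] at this
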